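/- arXiv:2408.09000 — 2 statements merged into one kernel-verified Lean document; each statement's English description precedes it below -/
import Mathlib

section
/- If X_T ~ N(0, T) and x̂₀(x_T) = x_T · √(2^(1-γ) / ((T+1)^γ (T+2)^(1-γ))), then x̂₀(X_T) is Gaussian with mean 0 and variance T·2^(1-γ)/((T+1)^γ (T+2)^(1-γ)), and this variance converges to 2^(1-γ) as T → ∞. -/
open Real MeasureTheory ProbabilityTheory Filter Topology

/- Scaling `N(0, T)` by `√c` gives `N(0, T c)`, which settles the law. For the variance, write
`T = T ^ γ * T ^ (1 - γ)`, so that it equals `(T / (T + 1)) ^ γ * (T / (T + 2)) ^ (1 - γ) * 2 ^ (1 - γ)`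
for `T > 0`, and both ratios tend to `1`. -/

lemma gaussianReal_map_mul_sqrt (μ : ℝ) {v c : ℝ} (hv : 0 ≤ v) (hc : 0 ≤ c) :
    (gaussianReal μ v.toNNReal).map (· * √c) = gaussianReal (√c * μ) (v * c).toNNReal := by
  rw [gaussianReal_map_mul_const]
  congr 1
  ext
  simp [Real.sq_sqrt hc, Real.coe_toNNReal _ hv, Real.coe_toNNReal _ (mul_nonneg hv hc), mul_comm]

lemma tendsto_div_add_const_atTop (c : ℝ) : Tendsto (fun x : ℝ => x / (x + c)) atTop (𝓝 1) := by
  have h : Tendsto (fun x : ℝ => (1 + c / x)⁻¹) atTop (𝓝 (1 + 0)⁻¹) :=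
    (tendsto_const_nhds.add (tendsto_const_nhds.div_atTop tendsto_id)).inv₀ (by norm_num)
  rw [add_zero, inv_one] at h
  refine h.congr' ?_
  filter_upwards [eventually_ne_atTop 0] with x hx
  rw [one_add_div hx, inv_div]

lemma tendsto_div_rpow_mul_rpow_one_sub (p a b : ℝ) :
    Tendsto (fun x : ℝ => x / ((x + a) ^ p * (x + b) ^ (1 - p))) atTop (𝓝 1) := by
  have h := ((tendsto_div_add_const_atTop a).rpow_const (p := p) (Or.inl one_ne_zero)).mul
    ((tendsto_div_add_const_atTop b).rpow_const (p := 1 - p) (Or.inl one_ne_zero))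
  rw [one_rpow, one_rpow, one_mul] at h
  refine h.congr' ?_
  filter_upwards [eventually_gt_atTop 0, eventually_gt_atTop (-a), eventually_gt_atTop (-b)]
    with x hx hxa hxb
  have hxa : 0 < x + a := by linarith
  have hxb : 0 < x + b := by linarith
  rw [div_rpow hx.le hxa.le, div_rpow hx.le hxb.le, div_mul_div_comm, ← rpow_add hx,
    add_sub_cancel, rpow_one]

/-- If `X_T ~ N(0, T)` and `x̂₀(x_T) = x_T · √(2^(1-γ)/((T+1)^γ (T+2)^(1-γ)))`, then
`x̂₀(X_T)` is Gaussian with mean `0` and variance `T·2^(1-γ)/((T+1)^γ (T+2)^(1-γ))`, and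
this variance converges to `2^(1-γ)` as `T → ∞`. -/
theorem stmt_7 (γ : ℝ) :
    (∀ T : ℝ, 0 < T →
      Measure.map
        (fun xT : ℝ => xT * Real.sqrt ((2:ℝ) ^ (1 - γ) / ((T + 1) ^ γ * (T + 2) ^ (1 - γ))))
        (gaussianReal 0 T.toNNReal)
      = gaussianReal 0 ((T * (2:ℝ) ^ (1 - γ) / ((T + 1) ^ γ * (T + 2) ^ (1 - γ))).toNNReal))
    ∧ Tendsto (fun T : ℝ => T * (2:ℝ) ^ (1 - γ) / ((T + 1) ^ γ * (T + 2) ^ (1 - γ)))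
        atTop (nhds ((2:ℝ) ^ (1 - γ))) := by
  refine ⟨fun T hT => ?_, ?_⟩
  · rw [gaussianReal_map_mul_sqrt 0 hT.le (by positivity), mul_zero, mul_div_assoc]
  · simpa only [div_mul_eq_mul_div, one_mul] using
      (tendsto_div_rpow_mul_rpow_one_sub γ 1 2).mul_const ((2:ℝ) ^ (1 - γ))
end

section
/- For every γ > 1, we have 2^(1-γ) < (2 - 2^(2-2γ))/(2γ-1) < 2/(γ+1). That is, the CFG-DDIM variance is strictly smaller than the CFG-DDPM variance, which is strictly smaller than the gamma-powered variance. -/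
open Real

/-!
Write `u = 2 ^ (1 - γ)`, so that `2 ^ (2 - 2γ) = u ^ 2`. After clearing denominators each
inequality says that an explicit function of `γ` vanishing at `γ = 1` is positive for `γ > 1`.
Both functions have positive derivative on `(1, ∞)`: bounding `u` or `1 / u` from below by
`1 + y ≤ exp y` reduces this to `2 / 3 < log 2 < 3 / 4`.
-/

lemma log_two_gt_two_thirds : 2 / 3 < log 2 := by
  linarith [log_two_gt_d9]

lemma log_two_lt_three_quarters : log 2 < 3 / 4 := by
  linarith [log_two_lt_d9]

lemma one_add_mul_log_le_rpow {a : ℝ} (ha : 0 < a) (x : ℝ) : 1 + x * log a ≤ a ^ x := by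
  rw [rpow_def_of_pos ha, mul_comm]
  linarith [add_one_le_exp (log a * x)]

lemma lt_of_hasDerivAt_pos {f f' : ℝ → ℝ} {a b : ℝ} (hf : ∀ x, HasDerivAt f (f' x) x)
    (hf' : ∀ x, a < x → 0 < f' x) (hab : a < b) : f a < f b :=
  strictMonoOn_of_hasDerivWithinAt_pos (convex_Ici a)
    (fun x _ ↦ (hf x).continuousAt.continuousWithinAt) (fun x _ ↦ (hf x).hasDerivWithinAt)
    (fun x hx ↦ hf' x (by simpa using hx)) Set.self_mem_Ici hab.le hab

lemma hasDerivAt_two_rpow_one_sub (x : ℝ) :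
    HasDerivAt (fun y ↦ (2 : ℝ) ^ (1 - y)) (-(log 2 * 2 ^ (1 - x))) x := by
  have h := ((hasDerivAt_id x).const_sub 1).const_rpow two_pos
  simp only [id] at h
  convert h using 1
  ring

lemma two_rpow_two_sub_two_mul (x : ℝ) : (2 : ℝ) ^ (2 - 2 * x) = ((2 : ℝ) ^ (1 - x)) ^ 2 := by
  rw [← rpow_natCast, ← rpow_mul zero_lt_two.le]
  ring_nf

lemma two_rpow_one_sub_mul_lt {γ : ℝ} (hγ : 1 < γ) :
    (2 : ℝ) ^ (1 - γ) * (2 * γ - 1) < 2 - ((2 : ℝ) ^ (1 - γ)) ^ 2 := by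
  set u : ℝ → ℝ := fun x ↦ (2 : ℝ) ^ (1 - x)
  have hu : ∀ x, HasDerivAt u (-(log 2 * u x)) x := hasDerivAt_two_rpow_one_sub
  have key := lt_of_hasDerivAt_pos (f := fun x ↦ 2 - u x ^ 2 - u x * (2 * x - 1))
    (f' := fun x ↦ u x * (2 * log 2 * u x + log 2 * (2 * x - 1) - 2))
    (fun x ↦ by
      refine ((((hu x).pow 2).const_sub 2).sub
        ((hu x).mul (((hasDerivAt_id x).const_mul 2).sub_const 1))).congr_deriv ?_
      simp only [id]
      ring)
    (fun x hx ↦ by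
      have hux : 1 + (1 - x) * log 2 ≤ u x := one_add_mul_log_le_rpow two_pos _
      have := log_two_gt_two_thirds
      have := log_two_lt_three_quarters
      refine mul_pos (rpow_pos_of_pos two_pos _) ?_
      nlinarith [mul_pos (mul_pos (log_pos one_lt_two) (by linarith : 0 < 1 - log 2)) (sub_pos.2 hx)])
    hγ
  simp only [u, sub_self, rpow_zero] at key
  linarith

lemma two_sub_two_rpow_mul_lt {γ : ℝ} (hγ : 1 < γ) :
    (2 - ((2 : ℝ) ^ (1 - γ)) ^ 2) * (γ + 1) < 2 * (2 * γ - 1) := by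
  set u : ℝ → ℝ := fun x ↦ (2 : ℝ) ^ (1 - x)
  have hu : ∀ x, HasDerivAt u (-(log 2 * u x)) x := hasDerivAt_two_rpow_one_sub
  have key := lt_of_hasDerivAt_pos (f := fun x ↦ u x ^ 2 * (x + 1) + 2 * x)
    (f' := fun x ↦ 2 + u x ^ 2 * (1 - 2 * log 2 * (x + 1)))
    (fun x ↦ by
      refine ((((hu x).pow 2).mul ((hasDerivAt_id x).add_const 1)).add
        ((hasDerivAt_id x).const_mul 2)).congr_deriv ?_
      simp only [id, Pi.pow_apply]
      ring)
    (fun x hx ↦ by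
      have huv : u x * 2 ^ (x - 1) = 1 := by
        simp only [u]
        rw [← rpow_add two_pos]
        norm_num
      have hv : 1 + (x - 1) * log 2 ≤ 2 ^ (x - 1) := one_add_mul_log_le_rpow two_pos _
      have := log_two_lt_three_quarters
      have hc : 2 * log 2 * (x + 1) - 1 < 2 * ((2 : ℝ) ^ (x - 1)) ^ 2 := by
        nlinarith [mul_pos (log_pos one_lt_two) (sub_pos.2 hx)]
      have hu2 : 0 < u x ^ 2 := pow_pos (rpow_pos_of_pos two_pos _) 2
      have h2 : u x ^ 2 * (2 * ((2 : ℝ) ^ (x - 1)) ^ 2) = 2 := by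
        linear_combination 2 * (u x * 2 ^ (x - 1) + 1) * huv
      nlinarith [mul_lt_mul_of_pos_left hc hu2])
    hγ
  simp only [u, sub_self, rpow_zero] at key
  linarith

/-- For every `γ > 1`, `2^(1-γ) < (2 - 2^(2-2γ))/(2γ-1) < 2/(γ+1)`: the CFG-DDIM variance
is strictly smaller than the CFG-DDPM variance, which is strictly smaller than the
gamma-powered variance. -/
theorem stmt_9 (γ : ℝ) (hγ : 1 < γ) :
    (2:ℝ) ^ (1 - γ) < (2 - (2:ℝ) ^ (2 - 2 * γ)) / (2 * γ - 1)
      ∧ (2 - (2:ℝ) ^ (2 - 2 * γ)) / (2 * γ - 1) < 2 / (γ + 1) := by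
  rw [two_rpow_two_sub_two_mul]
  constructor
  · rw [lt_div_iff₀ (by linarith)]
    exact two_rpow_one_sub_mul_lt hγ
  · rw [div_lt_div_iff₀ (by linarith) (by linarith)]
    exact two_sub_two_rpow_mul_lt hγ
end
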